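/- arXiv:2505.14799 — 6 statements merged into one kernel-verified Lean document; each statement's English description precedes it below -/
import Mathlib

section
/- Elliptic estimate on a finite connected weighted graph: there exists a constant C₁ depending only on the graph (V, ω, m) such that for every function u : V → ℝ, max_{x∈V} u(x) - min_{x∈V} u(x) ≤ C₁ · max_{x∈V} |Δu(x)|. -/
/-- The weighted graph Laplacian. -/
noncomputable def graphLap {V : Type*} [Fintype V] (m : V → ℝ) (ω : V → V → ℝ)
    (u : V → ℝ) (x : V) : ℝ :=
  (1 / m x) * ∑ y, ω x y * (u y - u x)

/-! On a finite graph `Δ` is a linear operator on the finite-dimensional space `V → ℝ`, and by the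
maximum principle on a connected graph its kernel consists of the constants. So `Δ` is injective on
the functions vanishing at a base point `x₀`, hence bounded below there. Subtracting `u x₀` changes
neither the oscillation of `u` nor `Δu`, and the oscillation is at most twice the sup norm. -/

open Finset LinearMap NNReal

theorem LinearMap.exists_norm_le_mul_norm_of_disjoint_ker {𝕜 E F : Type*}
    [NontriviallyNormedField 𝕜] [CompleteSpace 𝕜]
    [NormedAddCommGroup E] [NormedSpace 𝕜 E] [FiniteDimensional 𝕜 E]
    [NormedAddCommGroup F] [NormedSpace 𝕜 F]
    (f : E →ₗ[𝕜] F) {p : Submodule 𝕜 E} (hp : Disjoint p (ker f)) :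
    ∃ K : ℝ≥0, ∀ x ∈ p, ‖x‖ ≤ K * ‖f x‖ := by
  have hker : ker (f.domRestrict p) = ⊥ := by
    rw [ker_eq_bot']
    rintro ⟨x, hx⟩ hfx
    simpa using disjoint_ker.mp hp x hx hfx
  obtain ⟨K, -, hK⟩ := (f.domRestrict p).exists_antilipschitzWith hker
  exact ⟨K, fun x hx => hK.le_mul_norm (map_zero _) ⟨x, hx⟩⟩

section GraphLaplacian

variable {V : Type*} [Fintype V] (m : V → ℝ) (ω : V → V → ℝ)

noncomputable def graphLapLinearMap : (V → ℝ) →ₗ[ℝ] V → ℝ where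
  toFun := graphLap m ω
  map_add' u v := by
    ext x
    simp only [graphLap, Pi.add_apply, ← mul_add, ← sum_add_distrib]
    congr 1
    exact sum_congr rfl fun y _ => by ring
  map_smul' c u := by
    ext x
    simp only [graphLap, Pi.smul_apply, smul_eq_mul, RingHom.id_apply, mul_sum]
    exact sum_congr rfl fun y _ => by ring

@[simp]
theorem graphLapLinearMap_apply (u : V → ℝ) : graphLapLinearMap m ω u = graphLap m ω u := rfl

@[simp]
theorem graphLap_const (c : ℝ) : graphLap m ω (Function.const V c) = 0 := by
  ext x
  simp [graphLap]

variable {m ω}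

theorem graphLap_eq_zero_iff_sum_eq_zero (hm : ∀ x, 0 < m x) {u : V → ℝ} {x : V} :
    graphLap m ω u x = 0 ↔ ∑ y, ω x y * (u y - u x) = 0 := by
  simp [graphLap, (hm x).ne']

theorem eq_of_isMax_of_graphLap_eq_zero (hm : ∀ x, 0 < m x) (hnn : ∀ x y, 0 ≤ ω x y)
    {u : V → ℝ} {x y : V} (hmax : ∀ z, u z ≤ u x) (hx : graphLap m ω u x = 0)
    (hxy : 0 < ω x y) : u y = u x := by
  have hterm : ∀ z ∈ univ, ω x z * (u z - u x) ≤ 0 := fun z _ =>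
    mul_nonpos_of_nonneg_of_nonpos (hnn x z) (sub_nonpos.mpr (hmax z))
  have hy := (sum_eq_zero_iff_of_nonpos hterm).mp
    ((graphLap_eq_zero_iff_sum_eq_zero hm).mp hx) y (mem_univ y)
  rcases mul_eq_zero.mp hy with h | h
  · exact absurd h hxy.ne'
  · exact sub_eq_zero.mp h

theorem eq_of_graphLap_eq_zero [Nonempty V] (hm : ∀ x, 0 < m x) (hnn : ∀ x y, 0 ≤ ω x y)
    (hconn : ∀ x y : V, Relation.ReflTransGen (fun a b => 0 < ω a b) x y)
    {u : V → ℝ} (hu : ∀ x, graphLap m ω u x = 0) (x y : V) : u x = u y := by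
  obtain ⟨x₀, -, hx₀⟩ := exists_max_image univ u univ_nonempty
  suffices h : ∀ z, u z = u x₀ by rw [h x, h y]
  intro z
  induction hconn x₀ z with
  | refl => rfl
  | tail _ hbc ih =>
    have hmax : ∀ w, u w ≤ u _ := fun w => ih ▸ hx₀ w (mem_univ w)
    rw [eq_of_isMax_of_graphLap_eq_zero hm hnn hmax (hu _) hbc, ih]

end GraphLaplacian

theorem sup'_sub_inf'_le_two_mul_norm_sub_const {V : Type*} [Fintype V] [Nonempty V]
    (u : V → ℝ) (c : ℝ) :
    univ.sup' univ_nonempty u - univ.inf' univ_nonempty u ≤ 2 * ‖u - Function.const V c‖ := by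
  obtain ⟨x, -, hx⟩ := exists_mem_eq_sup' univ_nonempty u
  obtain ⟨y, -, hy⟩ := exists_mem_eq_inf' univ_nonempty u
  have hx' := norm_le_pi_norm (u - Function.const V c) x
  have hy' := norm_le_pi_norm (u - Function.const V c) y
  simp only [Pi.sub_apply, Function.const_apply, Real.norm_eq_abs] at hx' hy'
  rw [hx, hy]
  linarith [le_abs_self (u x - c), neg_abs_le (u y - c)]

theorem norm_le_sup'_abs {V : Type*} [Fintype V] [Nonempty V] (u : V → ℝ) :
    ‖u‖ ≤ univ.sup' univ_nonempty (fun x => |u x|) :=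
  (pi_norm_le_iff_of_nonneg (le_sup'_of_le _ (mem_univ (Classical.arbitrary V)) (abs_nonneg _))).mpr
    fun x => le_sup' (fun x => |u x|) (mem_univ x)

theorem elliptic_estimate_general {V : Type*} [Fintype V] [Nonempty V]
    (m : V → ℝ) (ω : V → V → ℝ)
    (hm : ∀ x, 0 < m x)
    (hnn : ∀ x y, 0 ≤ ω x y)
    (hconn : ∀ x y : V, Relation.ReflTransGen (fun a b => 0 < ω a b) x y) :
    ∃ C₁ : ℝ, ∀ u : V → ℝ,
      Finset.univ.sup' Finset.univ_nonempty u
        - Finset.univ.inf' Finset.univ_nonempty u ≤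
      C₁ * Finset.univ.sup' Finset.univ_nonempty (fun x => |graphLap m ω u x|) := by
  obtain ⟨x₀⟩ := ‹Nonempty V›
  have hdisj : Disjoint (ker (proj x₀ : (V → ℝ) →ₗ[ℝ] ℝ)) (ker (graphLapLinearMap m ω)) := by
    refine disjoint_ker.mpr fun u hu₀ hu => funext fun x => ?_
    rw [eq_of_graphLap_eq_zero hm hnn hconn (congr_fun hu) x x₀]
    exact hu₀
  obtain ⟨K, hK⟩ := (graphLapLinearMap m ω).exists_norm_le_mul_norm_of_disjoint_ker hdisj
  refine ⟨2 * K, fun u => ?_⟩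
  set w := u - Function.const V (u x₀)
  have hw : w ∈ ker (proj x₀ : (V → ℝ) →ₗ[ℝ] ℝ) := by simp [w]
  have hLw : graphLap m ω w = graphLap m ω u := by
    simpa [w] using map_sub (graphLapLinearMap m ω) u (Function.const V (u x₀))
  calc _ ≤ 2 * ‖w‖ := sup'_sub_inf'_le_two_mul_norm_sub_const u (u x₀)
    _ ≤ 2 * (K * ‖graphLap m ω u‖) := by grw [hK w hw, graphLapLinearMap_apply, hLw]
    _ = 2 * K * ‖graphLap m ω u‖ := by ring
    _ ≤ 2 * K * univ.sup' univ_nonempty (fun x => |graphLap m ω u x|) := by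
      grw [norm_le_sup'_abs]

/-- elliptic estimate on a finite connected weighted graph. -/
theorem elliptic_estimate {V : Type*} [Fintype V] [Nonempty V]
    (m : V → ℝ) (ω : V → V → ℝ)
    (hm : ∀ x, 0 < m x) (hsym : ∀ x y, ω x y = ω y x)
    (hnn : ∀ x y, 0 ≤ ω x y)
    (hconn : ∀ x y : V, Relation.ReflTransGen (fun a b => 0 < ω a b) x y) :
    ∃ C₁ : ℝ, ∀ u : V → ℝ,
      Finset.univ.sup' Finset.univ_nonempty u
        - Finset.univ.inf' Finset.univ_nonempty u ≤
      C₁ * Finset.univ.sup' Finset.univ_nonempty (fun x => |graphLap m ω u x|) :=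
  elliptic_estimate_general m ω hm hnn hconn
end

section
/- Maximum principle consequence: if u : V → ℝ on a finite connected weighted graph satisfies Δu(x) = e^{u(x)}(e^{u(x)} - 1) for all x ∈ V, then u ≡ 0. -/
/-- if Δu = e^u(e^u - 1) on a finite connected weighted graph, then u ≡ 0. -/
theorem max_principle_zero {V : Type*} [Fintype V] [Nonempty V]
    (m : V → ℝ) (ω : V → V → ℝ)
    (hm : ∀ x, 0 < m x) (hsym : ∀ x y, ω x y = ω y x)
    (hnn : ∀ x y, 0 ≤ ω x y)
    (hconn : ∀ x y : V, Relation.ReflTransGen (fun a b => 0 < ω a b) x y)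
    (u : V → ℝ)
    (heq : ∀ x, graphLap m ω u x = Real.exp (u x) * (Real.exp (u x) - 1)) :
    ∀ x, u x = 0 := by
  -- max point gives u ≤ 0, min point gives u ≥ 0
  obtain ⟨x0, hx0⟩ := Finite.exists_max u
  obtain ⟨x1, hx1⟩ := Finite.exists_min u
  have hle : u x0 ≤ 0 := by
    have hlap : graphLap m ω u x0 ≤ 0 := by
      have hsum : ∑ y, ω x0 y * (u y - u x0) ≤ 0 := by
        apply Finset.sum_nonpos
        intro y _
        exact mul_nonpos_of_nonneg_of_nonpos (hnn x0 y) (by linarith [hx0 y])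
      have : 0 < 1 / m x0 := one_div_pos.mpr (hm x0)
      exact mul_nonpos_of_nonneg_of_nonpos this.le hsum
    rw [heq x0] at hlap
    have h1 : Real.exp (u x0) ≤ 1 := by
      nlinarith [Real.exp_pos (u x0)]
    calc u x0 = Real.log (Real.exp (u x0)) := (Real.log_exp _).symm
      _ ≤ Real.log 1 := Real.log_le_log (Real.exp_pos _) h1
      _ = 0 := Real.log_one
  have hge : 0 ≤ u x1 := by
    have hlap : 0 ≤ graphLap m ω u x1 := by
      have hsum : 0 ≤ ∑ y, ω x1 y * (u y - u x1) := by
        apply Finset.sum_nonneg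
        intro y _
        exact mul_nonneg (hnn x1 y) (by linarith [hx1 y])
      have : 0 < 1 / m x1 := one_div_pos.mpr (hm x1)
      exact mul_nonneg this.le hsum
    rw [heq x1] at hlap
    have h1 : 1 ≤ Real.exp (u x1) := by
      nlinarith [Real.exp_pos (u x1)]
    calc (0:ℝ) = Real.log 1 := Real.log_one.symm
      _ ≤ Real.log (Real.exp (u x1)) := Real.log_le_log one_pos h1
      _ = u x1 := Real.log_exp _
  intro x
  have := hx0 x
  have := hx1 x
  linarith
end

section
/- If R is a real square matrix of the form R = sI - A where s > ρ(A) (spectral radius) and A has all entries nonnegative, then R is invertible and every entry of R⁻¹ is nonnegative. -/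
/-!
Every eigenvalue of `A / s` lies in the open unit disc, so by Gelfand's formula the norms
`‖(A / s) ^ k‖` decay geometrically and the Neumann series `∑ (A / s) ^ k` converges. Its sum
inverts `1 - A / s`, hence `(s • 1 - A)⁻¹ = s⁻¹ • ∑ (A / s) ^ k`, a convergent sum of entrywise
nonnegative matrices.
-/

open Filter Matrix

theorem summable_pow_of_spectralRadius_lt_one {A : Type*} [NormedRing A] [NormedAlgebra ℂ A]
    [CompleteSpace A] {a : A} (h : spectralRadius ℂ a < 1) : Summable (a ^ ·) := by
  obtain ⟨r, hρr, hr1⟩ := ENNReal.lt_iff_exists_nnreal_btwn.1 h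
  refine (summable_geometric_of_lt_one r.coe_nonneg (by exact_mod_cast hr1))
    |>.of_norm_bounded_eventually_nat ?_
  filter_upwards [(spectrum.pow_norm_pow_one_div_tendsto_nhds_spectralRadius a).eventually_lt_const
    hρr, eventually_gt_atTop 0] with k hk hk0
  rw [ENNReal.ofReal_lt_coe_iff (by positivity), one_div,
    Real.rpow_inv_lt_iff_of_pos (norm_nonneg _) r.coe_nonneg (by positivity),
    Real.rpow_natCast] at hk
  exact hk.le

theorem spectralRadius_inv_smul_lt_one {A : Type*} [NormedRing A] [NormedAlgebra ℂ A]
    [CompleteSpace A] [Nontrivial A] {a : A} {s : ℝ} (hs : ∀ μ ∈ spectrum ℂ a, ‖μ‖ < s) :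
    spectralRadius ℂ ((s : ℂ)⁻¹ • a) < 1 := by
  have hs0 : 0 < s := (norm_nonneg _).trans_lt (hs _ (spectrum.nonempty a).some_mem)
  refine spectrum.spectralRadius_lt_of_forall_lt _ fun z hz => ?_
  rw [spectrum.smul_eq_smul _ _ (spectrum.nonempty a), Set.mem_smul_set] at hz
  obtain ⟨μ, hμ, rfl⟩ := hz
  rw [← NNReal.coe_lt_coe, coe_nnnorm, NNReal.coe_one, smul_eq_mul, norm_mul, norm_inv,
    Complex.norm_real, Real.norm_of_nonneg hs0.le, inv_mul_lt_one₀ hs0]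
  exact hs μ hμ

namespace Matrix

theorem summable_of_summable_map_ofReal {ι m n : Type*} {f : ι → Matrix m n ℝ}
    (h : Summable fun k => (f k).map ((↑) : ℝ → ℂ)) : Summable f :=
  Pi.summable.2 fun i => Pi.summable.2 fun j =>
    Complex.summable_ofReal.1 (Pi.summable.1 (Pi.summable.1 h i) j)

theorem tsum_apply_nonneg {ι m n α : Type*} [AddCommMonoid α] [PartialOrder α]
    [IsOrderedAddMonoid α] [TopologicalSpace α] [OrderClosedTopology α] {f : ι → Matrix m n α}
    (hf : Summable f) (hf0 : ∀ k i j, 0 ≤ f k i j) (i : m) (j : n) : 0 ≤ (∑' k, f k) i j :=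
  (congrFun (tsum_apply hf) j).trans (tsum_apply (Pi.summable.1 hf i)) ▸
    tsum_nonneg fun k => hf0 k i j

variable {n : Type*} [Fintype n] [DecidableEq n]

theorem summable_pow_inv_smul_of_forall_norm_lt [Nonempty n] {A : Matrix n n ℝ} {s : ℝ}
    (hs : ∀ μ ∈ spectrum ℂ (A.map ((↑) : ℝ → ℂ)), ‖μ‖ < s) : Summable ((s⁻¹ • A) ^ ·) := by
  -- Any submultiplicative norm will do: the `L∞` operator norm induces the product topology.
  let _ : NormedRing (Matrix n n ℂ) := Matrix.linftyOpNormedRing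
  let _ : NormedAlgebra ℂ (Matrix n n ℂ) := Matrix.linftyOpNormedAlgebra
  refine summable_of_summable_map_ofReal ?_
  have hmap : (s⁻¹ • A).map ((↑) : ℝ → ℂ) = (s : ℂ)⁻¹ • A.map (↑) := by
    ext i j
    simp
  have hpow (k : ℕ) : ((s⁻¹ • A) ^ k).map ((↑) : ℝ → ℂ) = ((s⁻¹ • A).map (↑)) ^ k :=
    map_pow Complex.ofRealHom.mapMatrix (s⁻¹ • A) k
  simp only [hpow, hmap]
  exact summable_pow_of_spectralRadius_lt_one (spectralRadius_inv_smul_lt_one hs)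

theorem smul_one_sub_mul_tsum_pow {𝕜 : Type*} [Field 𝕜] [TopologicalSpace 𝕜]
    [IsTopologicalRing 𝕜] [T2Space 𝕜] {A : Matrix n n 𝕜} {s : 𝕜} (hs : s ≠ 0)
    (h : Summable ((s⁻¹ • A) ^ ·)) : (s • 1 - A) * (s⁻¹ • ∑' k, (s⁻¹ • A) ^ k) = 1 := by
  have hfactor : s • 1 - A = s • (1 - s⁻¹ • A) := by
    rw [smul_sub, smul_smul, mul_inv_cancel₀ hs, one_smul]
  rw [hfactor, smul_mul_smul, mul_inv_cancel₀ hs, one_smul, h.one_sub_mul_tsum_pow]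

end Matrix

/-- an M-matrix R = sI - A with A entrywise nonnegative and
s greater than the spectral radius of A is invertible with entrywise
nonnegative inverse. -/
theorem m_matrix_inverse_nonneg {n : Type*} [Fintype n] [DecidableEq n]
    (A : Matrix n n ℝ) (s : ℝ)
    (hA : ∀ i j, 0 ≤ A i j)
    (hs : ∀ μ ∈ spectrum ℂ (A.map (Complex.ofReal ·)), ‖μ‖ < s)
    (R : Matrix n n ℝ) (hR : R = s • (1 : Matrix n n ℝ) - A) :
    IsUnit R ∧ ∀ i j, 0 ≤ R⁻¹ i j := by
  subst hR
  rcases isEmpty_or_nonempty n with hn | hn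
  · exact ⟨isUnit_of_subsingleton _, isEmptyElim⟩
  have hs0 : 0 < s := (norm_nonneg _).trans_lt
    (hs _ (spectrum.nonempty_of_isAlgClosed_of_finiteDimensional ℂ _).some_mem)
  have hsum := summable_pow_inv_smul_of_forall_norm_lt hs
  have hinv := smul_one_sub_mul_tsum_pow hs0.ne' hsum
  have hB : ∀ i j, 0 ≤ (s⁻¹ • A) i j := fun i j => mul_nonneg (inv_nonneg.2 hs0.le) (hA i j)
  refine ⟨(isUnit_iff_isUnit_det _).2 (isUnit_det_of_right_inverse hinv), fun i j => ?_⟩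
  rw [inv_eq_right_inv hinv, Matrix.smul_apply, smul_eq_mul]
  exact mul_nonneg (inv_nonneg.2 hs0.le) (tsum_apply_nonneg hsum (pow_apply_nonneg hB) i j)
end

section
/- Row-sum preservation of the Schur complement: let L be the Laplacian of a connected weighted graph with block form L = [[P, Qᵀ],[Q, R]] with R invertible. Then the Schur complement L̃ = P - Qᵀ R⁻¹ Q has all column sums equal to zero, has nonpositive off-diagonal entries, and dim ker L̃ = 1 (so L̃ is the Laplacian of a connected weighted graph on the first r vertices). -/
/-!
Since `L` is symmetric with zero row sums, `vᵀ L v = ½ ∑ᵢⱼ (-Lᵢⱼ)(vᵢ - vⱼ)² ≥ 0`, and as its kernel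
is the constants, `L` is positive definite on vectors vanishing on the first block: the block `R`
is a positive definite Z-matrix, hence an M-matrix with `R⁻¹ ≥ 0` entrywise. This makes
`Qᵀ R⁻¹ Q ≥ 0`, so the off-diagonal entries of `P - Qᵀ R⁻¹ Q` stay nonpositive. Block elimination
identifies the kernel of the Schur complement with the projection of the kernel of `L`, i.e. with
the constants; together with symmetry this gives the zero column sums.
-/

open Matrix

namespace Matrix

variable {n : Type*} [Fintype n]

theorem sum_mul_sub_sq_eq_neg_two_mul_dotProduct_mulVec {A : Matrix n n ℝ} (hA : A.IsSymm)
    (hrow : A *ᵥ (fun _ => 1) = 0) (v : n → ℝ) :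
    ∑ i, ∑ j, A i j * (v i - v j) ^ 2 = -2 * (v ⬝ᵥ A *ᵥ v) := by
  have hrow' (i : n) : ∑ j, A i j = 0 := by simpa [mulVec, dotProduct] using congrFun hrow i
  have hcol (j : n) : ∑ i, A i j = 0 := by simpa only [hA.apply] using hrow' j
  have hsq (i j : n) : A i j * (v i - v j) ^ 2
      = A i j * v i ^ 2 + A i j * v j ^ 2 - 2 * (v i * (A i j * v j)) := by ring
  simp only [hsq, Finset.sum_sub_distrib, Finset.sum_add_distrib, ← Finset.sum_mul, hrow',
    Finset.sum_comm (f := fun i j => A i j * v j ^ 2), hcol, ← Finset.mul_sum, dotProduct, mulVec]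
  simp

theorem posSemidef_of_isSymm_of_mulVec_const_eq_zero {A : Matrix n n ℝ} (hA : A.IsSymm)
    (hrow : A *ᵥ (fun _ => 1) = 0) (hoff : ∀ i j, i ≠ j → A i j ≤ 0) : A.PosSemidef := by
  refine .of_dotProduct_mulVec_nonneg (isHermitian_iff_isSymm.2 hA) fun v => ?_
  have hsum : ∑ i, ∑ j, A i j * (v i - v j) ^ 2 ≤ 0 := by
    refine Finset.sum_nonpos fun i _ => Finset.sum_nonpos fun j _ => ?_
    obtain rfl | hij := eq_or_ne i j
    · simp
    · exact mul_nonpos_of_nonpos_of_nonneg (hoff i j hij) (sq_nonneg _)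
  rw [sum_mul_sub_sq_eq_neg_two_mul_dotProduct_mulVec hA hrow] at hsum
  simpa using hsum

theorem dotProduct_mulVec_nonpos {A : Matrix n n ℝ} (hoff : ∀ i j, i ≠ j → A i j ≤ 0)
    {u w : n → ℝ} (hu : 0 ≤ u) (hw : 0 ≤ w) (huw : ∀ i, u i * w i = 0) :
    u ⬝ᵥ A *ᵥ w ≤ 0 := by
  simp only [dotProduct, mulVec, Finset.mul_sum]
  refine Finset.sum_nonpos fun i _ => Finset.sum_nonpos fun j _ => ?_
  obtain rfl | hij := eq_or_ne i j
  · rw [mul_left_comm, huw, mul_zero]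
  · exact mul_nonpos_of_nonneg_of_nonpos (hu i)
      (mul_nonpos_of_nonpos_of_nonneg (hoff i j hij) (hw j))

theorem PosDef.nonneg_of_mulVec_nonneg {A : Matrix n n ℝ} (hA : A.PosDef)
    (hoff : ∀ i j, i ≠ j → A i j ≤ 0) {x : n → ℝ} (hx : 0 ≤ A *ᵥ x) : 0 ≤ x := by
  have hdisj (i : n) : x⁻ i * x⁺ i = 0 := by
    change (x i)⁻ * (x i)⁺ = 0
    rcases le_total 0 (x i) with h | h
    · simp [negPart_eq_zero.2 h]
    · simp [posPart_eq_zero.2 h]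
  -- The cross term `x⁻ ⬝ᵥ A *ᵥ x⁺` only sees off-diagonal entries, as `x⁻` and `x⁺` are disjoint.
  have hneg : x⁻ ⬝ᵥ A *ᵥ x⁻ ≤ 0 := calc
    x⁻ ⬝ᵥ A *ᵥ x⁻ = x⁻ ⬝ᵥ A *ᵥ x⁺ - x⁻ ⬝ᵥ A *ᵥ x := by
      rw [← sub_sub_cancel (x⁻ ⬝ᵥ A *ᵥ x⁺) (x⁻ ⬝ᵥ A *ᵥ x⁻), ← dotProduct_sub, ← mulVec_sub,
        posPart_sub_negPart]
    _ ≤ 0 := sub_nonpos_of_le <| (dotProduct_mulVec_nonpos hoff (negPart_nonneg x)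
      (posPart_nonneg x) hdisj).trans (dotProduct_nonneg_of_nonneg (negPart_nonneg x) hx)
  have hneg_zero : x⁻ = 0 := by
    by_contra h
    simpa using (hA.dotProduct_mulVec_pos h).trans_le hneg
  exact negPart_eq_zero.1 hneg_zero

theorem PosDef.inv_apply_nonneg [DecidableEq n] {A : Matrix n n ℝ} (hA : A.PosDef)
    (hoff : ∀ i j, i ≠ j → A i j ≤ 0) (i j : n) : 0 ≤ A⁻¹ i j := by
  have hcol : A *ᵥ A⁻¹.col j = Pi.single j 1 := by
    rw [← mulVec_single_one, mulVec_mulVec,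
      mul_nonsing_inv _ ((isUnit_iff_isUnit_det A).1 hA.isUnit), one_mulVec]
  exact hA.nonneg_of_mulVec_nonneg hoff (hcol ▸ Pi.single_nonneg.2 zero_le_one) i

variable {α β R : Type*} [Fintype β]

theorem PosSemidef.posDef_toBlocks₂₂ [Fintype α] [Nonempty α] {M : Matrix (α ⊕ β) (α ⊕ β) ℝ}
    (hM : M.PosSemidef) (hker : ∀ v, M *ᵥ v = 0 → ∃ c, v = fun _ => c) :
    M.toBlocks₂₂.PosDef := by
  refine .of_dotProduct_mulVec_pos (hM.isHermitian.submatrix Sum.inr) fun w hw => ?_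
  have hq : Sum.elim 0 w ⬝ᵥ M *ᵥ Sum.elim 0 w = w ⬝ᵥ M.toBlocks₂₂ *ᵥ w := by
    conv_lhs => rw [← fromBlocks_toBlocks M]
    simp [fromBlocks_mulVec, sumElim_dotProduct_sumElim]
  have hnonneg : 0 ≤ Sum.elim 0 w ⬝ᵥ M *ᵥ Sum.elim 0 w := by
    simpa using hM.dotProduct_mulVec_nonneg (Sum.elim 0 w)
  rw [star_trivial, ← hq]
  refine hnonneg.lt_of_ne' fun h0 => hw ?_
  obtain ⟨c, hc⟩ := hker _ ((hM.dotProduct_mulVec_zero_iff _).1 (by simpa using h0))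
  have hc0 : c = 0 := (congrFun hc (Sum.inl (Classical.arbitrary α))).symm
  exact funext fun b => (congrFun hc (Sum.inr b)).trans hc0

variable [DecidableEq β]

noncomputable def schurComplement₂₂ [CommRing R] (M : Matrix (α ⊕ β) (α ⊕ β) R) : Matrix α α R :=
  M.toBlocks₁₁ - M.toBlocks₁₂ * M.toBlocks₂₂⁻¹ * M.toBlocks₂₁

theorem schurComplement₂₂_mulVec_eq_zero_iff [Fintype α] [CommRing R]
    {M : Matrix (α ⊕ β) (α ⊕ β) R} (hD : IsUnit M.toBlocks₂₂.det) (x : α → R) :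
    M.schurComplement₂₂ *ᵥ x = 0 ↔ ∃ y, M *ᵥ Sum.elim x y = 0 := by
  rw [← fromBlocks_toBlocks M]
  simp only [schurComplement₂₂, toBlocks_fromBlocks₁₁, toBlocks_fromBlocks₁₂,
    toBlocks_fromBlocks₂₁, toBlocks_fromBlocks₂₂, fromBlocks_mulVec, Sum.elim_comp_inl,
    Sum.elim_comp_inr, ← Sum.elim_zero_zero, Sum.elim_eq_iff]
  set A := M.toBlocks₁₁
  set B := M.toBlocks₁₂
  set C := M.toBlocks₂₁
  set D := M.toBlocks₂₂
  have hDD : D * D⁻¹ = 1 := mul_nonsing_inv D hD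
  have hSchur : (A - B * D⁻¹ * C) *ᵥ x = A *ᵥ x + B *ᵥ -(D⁻¹ *ᵥ C *ᵥ x) := by
    rw [sub_mulVec, mulVec_neg, mulVec_mulVec, mulVec_mulVec, sub_eq_add_neg]
  constructor
  · intro hx
    refine ⟨-(D⁻¹ *ᵥ C *ᵥ x), by rwa [← hSchur], ?_⟩
    rw [mulVec_neg, mulVec_mulVec, hDD, one_mulVec, add_neg_cancel]
  · rintro ⟨y, hAB, hCD⟩
    have hy : y = -(D⁻¹ *ᵥ C *ᵥ x) := by
      rw [eq_neg_iff_add_eq_zero, ← one_mulVec y, ← nonsing_inv_mul D hD, ← mulVec_mulVec,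
        ← mulVec_add, add_comm, hCD, mulVec_zero]
    rwa [hSchur, ← hy]

theorem IsSymm.schurComplement₂₂ [CommRing R] {M : Matrix (α ⊕ β) (α ⊕ β) R} (hM : M.IsSymm) :
    M.schurComplement₂₂.IsSymm := by
  have h₁₁ : M.toBlocks₁₁ᵀ = M.toBlocks₁₁ := by ext; exact hM.apply _ _
  have h₂₂ : M.toBlocks₂₂ᵀ = M.toBlocks₂₂ := by ext; exact hM.apply _ _
  have h₁₂ : M.toBlocks₁₂ᵀ = M.toBlocks₂₁ := by ext; exact hM.apply _ _
  have h₂₁ : M.toBlocks₂₁ᵀ = M.toBlocks₁₂ := by ext; exact hM.apply _ _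
  unfold IsSymm Matrix.schurComplement₂₂
  rw [transpose_sub, transpose_mul, transpose_mul,
    transpose_nonsing_inv, h₁₁, h₂₂, h₁₂, h₂₁, Matrix.mul_assoc]

theorem schurComplement₂₂_mulVec_eq_zero_iff_eq_const [Fintype α] [CommRing R]
    {M : Matrix (α ⊕ β) (α ⊕ β) R} (hD : IsUnit M.toBlocks₂₂.det)
    (hker : ∀ v, M *ᵥ v = 0 ↔ ∃ c, v = fun _ => c) (x : α → R) :
    M.schurComplement₂₂ *ᵥ x = 0 ↔ ∃ c, x = fun _ => c := by
  rw [schurComplement₂₂_mulVec_eq_zero_iff hD]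
  constructor
  · rintro ⟨y, hy⟩
    obtain ⟨c, hc⟩ := (hker _).1 hy
    exact ⟨c, funext fun a => congrFun hc (Sum.inl a)⟩
  · rintro ⟨c, rfl⟩
    exact ⟨fun _ => c, (hker _).2 ⟨c, by ext (a | b) <;> rfl⟩⟩

theorem schurComplement₂₂_apply_nonpos {M : Matrix (α ⊕ β) (α ⊕ β) ℝ}
    (hoff : ∀ i j, i ≠ j → M i j ≤ 0) (hD : M.toBlocks₂₂.PosDef) {i j : α} (hij : i ≠ j) :
    M.schurComplement₂₂ i j ≤ 0 := by
  have hBDinv (l : β) : (M.toBlocks₁₂ * M.toBlocks₂₂⁻¹) i l ≤ 0 :=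
    Finset.sum_nonpos fun k _ => mul_nonpos_of_nonpos_of_nonneg (hoff _ _ Sum.inl_ne_inr)
      (hD.inv_apply_nonneg (fun k l hkl => hoff _ _ (Sum.inr_injective.ne hkl)) k l)
  have hBDinvC : 0 ≤ (M.toBlocks₁₂ * M.toBlocks₂₂⁻¹ * M.toBlocks₂₁) i j :=
    Finset.sum_nonneg fun l _ => mul_nonneg_of_nonpos_of_nonpos (hBDinv l)
      (hoff _ _ Sum.inr_ne_inl)
  have hA : M.toBlocks₁₁ i j ≤ 0 := hoff _ _ (Sum.inl_injective.ne hij)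
  rw [schurComplement₂₂, sub_apply]
  linarith

end Matrix

theorem schur_complement_laplacian_general {α β : Type*} [Fintype α] [Fintype β]
    [DecidableEq β] [Nonempty α]
    (L : Matrix (α ⊕ β) (α ⊕ β) ℝ)
    (hsym : L.IsSymm)
    (hrow : L.mulVec (fun _ => (1 : ℝ)) = 0)
    (hoff : ∀ i j : α ⊕ β, i ≠ j → L i j ≤ 0)
    (hker : ∀ v : α ⊕ β → ℝ, L.mulVec v = 0 ↔ ∃ c : ℝ, v = fun _ => c)
    (Ltilde : Matrix α α ℝ)
    (hLt : Ltilde = L.toBlocks₁₁ - L.toBlocks₁₂ * (L.toBlocks₂₂)⁻¹ * L.toBlocks₂₁) :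
    (∀ j : α, ∑ i : α, Ltilde i j = 0) ∧
    (∀ i j : α, i ≠ j → Ltilde i j ≤ 0) ∧
    (∀ v : α → ℝ, Ltilde.mulVec v = 0 ↔ ∃ c : ℝ, v = fun _ => c) := by
  obtain rfl : Ltilde = L.schurComplement₂₂ := hLt
  have hD : L.toBlocks₂₂.PosDef :=
    (posSemidef_of_isSymm_of_mulVec_const_eq_zero hsym hrow hoff).posDef_toBlocks₂₂
      fun v => (hker v).1
  have hkerS := schurComplement₂₂_mulVec_eq_zero_iff_eq_const
    ((isUnit_iff_isUnit_det _).1 hD.isUnit) hker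
  refine ⟨fun j => ?_, fun i j => schurComplement₂₂_apply_nonpos hoff hD, hkerS⟩
  have hconst : L.schurComplement₂₂ *ᵥ (fun _ => 1) = 0 := (hkerS _).2 ⟨1, rfl⟩
  simpa [mulVec, dotProduct, hsym.schurComplement₂₂.apply] using congrFun hconst j

/-- the Schur complement of the lower-right block of a connected
graph Laplacian has zero column sums, nonpositive off-diagonal entries, and
one-dimensional kernel (spanned by the constants). -/
theorem schur_complement_laplacian {α β : Type*} [Fintype α] [Fintype β]
    [DecidableEq α] [DecidableEq β] [Nonempty α] [Nonempty β]
    (L : Matrix (α ⊕ β) (α ⊕ β) ℝ)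
    (hsym : L.IsSymm)
    (hrow : L.mulVec (fun _ => (1 : ℝ)) = 0)
    (hoff : ∀ i j : α ⊕ β, i ≠ j → L i j ≤ 0)
    (hker : ∀ v : α ⊕ β → ℝ, L.mulVec v = 0 ↔ ∃ c : ℝ, v = fun _ => c)
    (hR : IsUnit (L.toBlocks₂₂).det)
    (Ltilde : Matrix α α ℝ)
    (hLt : Ltilde = L.toBlocks₁₁ - L.toBlocks₁₂ * (L.toBlocks₂₂)⁻¹ * L.toBlocks₂₁) :
    (∀ j : α, ∑ i : α, Ltilde i j = 0) ∧
    (∀ i j : α, i ≠ j → Ltilde i j ≤ 0) ∧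
    (∀ v : α → ℝ, Ltilde.mulVec v = 0 ↔ ∃ c : ℝ, v = fun _ => c) :=
  schur_complement_laplacian_general L hsym hrow hoff hker Ltilde hLt
end

section
/- Nonexistence threshold in the negative-leading-coefficient case: let u solve -Δu = f₂ e^{2u} + f₁ e^u + c on a finite connected weighted graph, where f₂ ≤ 0, f₁(x) ≤ 0 whenever f₂(x) = 0, and f₂ is not identically zero. If c < - max over { x : f₂(x) ≠ 0 } of f₁(x)² / (4 · (-f₂(x))), then the equation has no solutions. -/
/-- nonexistence for sufficiently negative c in the
negative-leading-coefficient case. -/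
theorem no_solution_of_very_negative_c {V : Type*} [Fintype V] [Nonempty V]
    (m : V → ℝ) (ω : V → V → ℝ)
    (hm : ∀ x, 0 < m x) (hsym : ∀ x y, ω x y = ω y x)
    (hnn : ∀ x y, 0 ≤ ω x y)
    (hconn : ∀ x y : V, Relation.ReflTransGen (fun a b => 0 < ω a b) x y)
    (f₁ f₂ : V → ℝ) (c : ℝ)
    (hf₂ : ∀ x, f₂ x ≤ 0)
    (hf₁ : ∀ x, f₂ x = 0 → f₁ x ≤ 0)
    (hS : (Finset.univ.filter fun x => f₂ x ≠ 0).Nonempty)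
    (hc : c < -(Finset.univ.filter fun x => f₂ x ≠ 0).sup' hS
        (fun x => f₁ x ^ 2 / (4 * (-f₂ x)))) :
    ¬ ∃ u : V → ℝ, ∀ x,
        -graphLap m ω u x =
          f₂ x * Real.exp (2 * u x) + f₁ x * Real.exp (u x) + c := by
  rintro ⟨u, hu⟩
  set S := (Finset.univ.filter fun x => f₂ x ≠ 0) with hSdef
  set M := S.sup' hS (fun x => f₁ x ^ 2 / (4 * (-f₂ x))) with hMdef
  -- M ≥ 0
  obtain ⟨x₀, hx₀⟩ := hS
  have hx₀' : f₂ x₀ ≠ 0 := (Finset.mem_filter.mp hx₀).2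
  have hM0 : 0 ≤ M := by
    refine le_trans ?_ (Finset.le_sup' _ hx₀)
    have : 0 < -f₂ x₀ := by cases lt_or_eq_of_le (hf₂ x₀) with
      | inl h => linarith
      | inr h => exact absurd h hx₀'
    positivity
  -- pointwise negativity of RHS
  have hpt : ∀ x, f₂ x * Real.exp (2 * u x) + f₁ x * Real.exp (u x) + c < 0 := by
    intro x
    by_cases h2 : f₂ x = 0
    · have h1 := hf₁ x h2
      have ht : 0 < Real.exp (u x) := Real.exp_pos _
      have hz : f₂ x * Real.exp (2 * u x) = 0 := by rw [h2]; ring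
      nlinarith [mul_nonpos_of_nonpos_of_nonneg h1 ht.le]
    · have hx : x ∈ S := Finset.mem_filter.mpr ⟨Finset.mem_univ x, h2⟩
      have hneg : 0 < -f₂ x := by cases lt_or_eq_of_le (hf₂ x) with
        | inl h => linarith
        | inr h => exact absurd h h2
      have hle : f₁ x ^ 2 / (4 * (-f₂ x)) ≤ M :=
        Finset.le_sup' (fun x => f₁ x ^ 2 / (4 * (-f₂ x))) hx
      have hle' : f₁ x ^ 2 ≤ M * (4 * (-f₂ x)) := by
        rwa [div_le_iff₀ (by positivity)] at hle
      have ht : 0 < Real.exp (u x) := Real.exp_pos _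
      have h2u : Real.exp (2 * u x) = Real.exp (u x) ^ 2 := by
        rw [two_mul, Real.exp_add, sq]
      rw [h2u]
      nlinarith [sq_nonneg (2 * f₂ x * Real.exp (u x) + f₁ x), ht, hneg, hle', hc]
  -- sum of m x * Laplacian is zero
  have hsum0 : ∑ x, m x * graphLap m ω u x = 0 := by
    have hm' : ∀ x, m x * graphLap m ω u x = ∑ y, ω x y * (u y - u x) := by
      intro x
      unfold graphLap
      field_simp
      exact mul_div_cancel_left₀ _ (hm x).ne'
    rw [Finset.sum_congr rfl (fun x _ => hm' x)]
    have h1 : ∑ x, ∑ y, ω x y * (u y - u x)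
        = ∑ y, ∑ x, ω x y * (u y - u x) := Finset.sum_comm
    have h2 : ∑ y, ∑ x, ω x y * (u y - u x)
        = -∑ x, ∑ y, ω x y * (u y - u x) := by
      rw [← Finset.sum_neg_distrib]
      refine Finset.sum_congr rfl fun y _ => ?_
      rw [← Finset.sum_neg_distrib]
      refine Finset.sum_congr rfl fun x _ => ?_
      rw [hsym x y]; ring
    linarith [h1, h2]
  -- derive contradiction
  have hlt : 0 < ∑ x, m x * graphLap m ω u x := by
    have : ∀ x ∈ Finset.univ, (0:ℝ) < m x * graphLap m ω u x := by
      intro x _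
      have := hu x
      have hrhs := hpt x
      have hg : 0 < graphLap m ω u x := by linarith
      exact mul_pos (hm x) hg
    calc (0:ℝ) = ∑ _x : V, (0 : ℝ) := by simp
      _ < ∑ x, m x * graphLap m ω u x := Finset.sum_lt_sum_of_nonempty Finset.univ_nonempty this
  linarith
end

section
/- Sub/supersolution minimizer lemma on finite graphs: let f : V × ℝ → ℝ be continuous, φ₁ ≤ φ₂ be a subsolution and a supersolution of -Δu = f(x, u) respectively (i.e., -Δφ₁(x) ≤ f(x, φ₁(x)) and -Δφ₂(x) ≥ f(x, φ₂(x)) for all x). Then any minimizer u of the functional J(u) = Σ_V ((1/2)|∇u|² - F(x, u(x))) over the set {u : φ₁ ≤ u ≤ φ₂}, where ∂F/∂u = f, solves -Δu = f(x, u). -/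
/-- The energy functional J(u) = Σ_V ((1/2)|∇u|² - F(x, u(x))), where
|∇u|²(x) = (1/(2m(x))) Σ_y ω_{xy}(u(y)-u(x))² and F(x,s) = ∫₀^s f(x,t) dt. -/
noncomputable def graphEnergy {V : Type*} [Fintype V] (m : V → ℝ)
    (ω : V → V → ℝ) (f : V → ℝ → ℝ) (u : V → ℝ) : ℝ :=
  ∑ x, m x * ((1 / 2) * ((1 / (2 * m x)) * ∑ y, ω x y * (u y - u x) ^ 2)
      - ∫ t in (0 : ℝ)..(u x), f x t)

/-!
At a point `x₀` with `φ₁ x₀ < u x₀`, lowering `u x₀` slightly keeps `u` admissible, so the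
derivative `m x₀ (-Δu(x₀) - f(x₀, u x₀))` of `t ↦ J(u + t δ_{x₀})` at `0` is `≤ 0`. Where
`u x₀ = φ₁ x₀` instead, `u - φ₁ ≥ 0` vanishes at `x₀`, so `-Δu(x₀) ≤ -Δφ₁(x₀) ≤ f(x₀, φ₁ x₀)`.
The reverse inequality comes from `φ₂` in the same way.
-/

open Set

section OneSided

variable {g : ℝ → ℝ} {D a b c : ℝ}

lemma HasDerivAt.nonpos_of_isMinOn_Icc (hg : HasDerivAt g D c) (hmin : IsMinOn g (Icc a c) c)
    (hac : a < c) : D ≤ 0 := by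
  have hcone : a - c ∈ posTangentConeAt (Icc a c) c := by
    refine sub_mem_posTangentConeAt_of_segment_subset ?_
    rw [segment_eq_Icc', min_eq_right hac.le, max_eq_left hac.le]
  have := hmin.localize.hasFDerivWithinAt_nonneg hg.hasFDerivAt.hasFDerivWithinAt hcone
  simp only [ContinuousLinearMap.toSpanSingleton_apply, smul_eq_mul] at this
  nlinarith

lemma HasDerivAt.nonneg_of_isMinOn_Icc (hg : HasDerivAt g D c) (hmin : IsMinOn g (Icc c b) c)
    (hcb : c < b) : 0 ≤ D := by
  have hcone : b - c ∈ posTangentConeAt (Icc c b) c := by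
    refine sub_mem_posTangentConeAt_of_segment_subset ?_
    rw [segment_eq_Icc', min_eq_left hcb.le, max_eq_right hcb.le]
  have := hmin.localize.hasFDerivWithinAt_nonneg hg.hasFDerivAt.hasFDerivWithinAt hcone
  simp only [ContinuousLinearMap.toSpanSingleton_apply, smul_eq_mul] at this
  nlinarith

end OneSided

section GraphLaplacian

variable {V : Type*} [Fintype V] {m : V → ℝ} {ω : V → V → ℝ}

lemma graphLap_le_graphLap_of_le_of_eq {u v : V → ℝ} {x : V} (hm : 0 ≤ m x)
    (hω : ∀ y, 0 ≤ ω x y) (huv : u ≤ v) (hx : u x = v x) :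
    graphLap m ω u x ≤ graphLap m ω v x := by
  unfold graphLap
  gcongr with y
  · exact hω y
  · linarith [huv y]
  · exact hx.ge

lemma mul_graphLap {x : V} (hm : m x ≠ 0) (u : V → ℝ) :
    m x * graphLap m ω u x = ∑ y, ω x y * (u y - u x) := by
  rw [graphLap, ← mul_assoc, mul_one_div_cancel hm, one_mul]

lemma sum_sum_mul_sub_mul_sub (hm : ∀ x, m x ≠ 0) (hsym : ∀ x y, ω x y = ω y x) (u d : V → ℝ) :
    ∑ x, ∑ y, ω x y * (u y - u x) * (d y - d x) = -2 * ∑ x, m x * graphLap m ω u x * d x := by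
  have hswap : ∑ x, ∑ y, ω x y * (u y - u x) * d y = -∑ x, d x * ∑ y, ω x y * (u y - u x) := by
    rw [Finset.sum_comm, ← Finset.sum_neg_distrib]
    refine Finset.sum_congr rfl fun x _ => ?_
    rw [Finset.mul_sum, ← Finset.sum_neg_distrib]
    exact Finset.sum_congr rfl fun y _ => by rw [hsym]; ring
  have hsplit : ∀ x, ∑ y, ω x y * (u y - u x) * (d y - d x)
      = ∑ y, ω x y * (u y - u x) * d y - d x * ∑ y, ω x y * (u y - u x) := by
    intro x
    rw [Finset.mul_sum, ← Finset.sum_sub_distrib]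
    exact Finset.sum_congr rfl fun y _ => by ring
  simp only [hsplit, Finset.sum_sub_distrib, hswap, ← mul_graphLap (hm _)]
  rw [Finset.mul_sum, ← Finset.sum_neg_distrib, ← Finset.sum_sub_distrib]
  exact Finset.sum_congr rfl fun x _ => by ring

lemma graphEnergy_eq (hm : ∀ x, m x ≠ 0) (f : V → ℝ → ℝ) (u : V → ℝ) :
    graphEnergy m ω f u = (1 / 4) * ∑ x, ∑ y, ω x y * (u y - u x) ^ 2
      - ∑ x, m x * ∫ t in (0 : ℝ)..(u x), f x t := by
  rw [graphEnergy, Finset.mul_sum, ← Finset.sum_sub_distrib]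
  refine Finset.sum_congr rfl fun x _ => ?_
  field_simp [hm x]
  ring

lemma hasDerivAt_graphEnergy_add_smul (hm : ∀ x, m x ≠ 0) (hsym : ∀ x y, ω x y = ω y x)
    {f : V → ℝ → ℝ} (hf : ∀ x, Continuous (f x)) (u d : V → ℝ) :
    HasDerivAt (fun t : ℝ => graphEnergy m ω f (u + t • d))
      (∑ x, m x * (-graphLap m ω u x - f x (u x)) * d x) 0 := by
  have hline : ∀ x, HasDerivAt (fun t : ℝ => (u + t • d) x) (d x) 0 := fun x => by
    simpa using ((hasDerivAt_id (0 : ℝ)).mul_const (d x)).const_add (u x)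
  have hdirichlet : HasDerivAt
      (fun t : ℝ => ∑ x, ∑ y, ω x y * ((u + t • d) y - (u + t • d) x) ^ 2)
      (2 * ∑ x, ∑ y, ω x y * (u y - u x) * (d y - d x)) 0 := by
    simp only [Finset.mul_sum]
    refine HasDerivAt.fun_sum fun x _ => HasDerivAt.fun_sum fun y _ => ?_
    refine ((((hline y).sub (hline x)).pow 2).const_mul (ω x y)).congr_deriv ?_
    simp only [Pi.sub_apply, Pi.add_apply, Pi.smul_apply, smul_eq_mul, zero_mul, add_zero,
      Nat.cast_ofNat, Nat.add_one_sub_one, pow_one]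
    ring
  have hpotential : HasDerivAt (fun t : ℝ => ∑ x, m x * ∫ s in (0 : ℝ)..(u + t • d) x, f x s)
      (∑ x, m x * (f x (u x) * d x)) 0 := by
    refine HasDerivAt.fun_sum fun x _ => HasDerivAt.const_mul (m x) ?_
    exact ((hf x).integral_hasStrictDerivAt 0 (u x)).hasDerivAt.comp_of_eq 0 (hline x) (by simp)
  simp only [graphEnergy_eq hm]
  refine ((hdirichlet.const_mul (1 / 4)).sub hpotential).congr_deriv ?_
  rw [sum_sum_mul_sub_mul_sub hm hsym]
  simp only [Finset.mul_sum, ← Finset.sum_sub_distrib]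
  exact Finset.sum_congr rfl fun x _ => by ring

end GraphLaplacian

theorem sub_supersolution_minimizer_general {V : Type*} [Fintype V]
    (m : V → ℝ) (ω : V → V → ℝ)
    (hm : ∀ x, 0 < m x) (hsym : ∀ x y, ω x y = ω y x)
    (hnn : ∀ x y, 0 ≤ ω x y)
    (f : V → ℝ → ℝ) (hf : ∀ x, Continuous (f x))
    (φ₁ φ₂ : V → ℝ)
    (hsub : ∀ x, -graphLap m ω φ₁ x ≤ f x (φ₁ x))
    (hsuper : ∀ x, -graphLap m ω φ₂ x ≥ f x (φ₂ x))
    (u : V → ℝ)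
    (hmem : ∀ x, φ₁ x ≤ u x ∧ u x ≤ φ₂ x)
    (hmin : ∀ v : V → ℝ, (∀ x, φ₁ x ≤ v x ∧ v x ≤ φ₂ x) →
        graphEnergy m ω f u ≤ graphEnergy m ω f v) :
    ∀ x, -graphLap m ω u x = f x (u x) := by
  classical
  intro x₀
  set g : ℝ → ℝ := fun t => graphEnergy m ω f (u + t • Pi.single x₀ 1)
  have hg : HasDerivAt g (m x₀ * (-graphLap m ω u x₀ - f x₀ (u x₀))) 0 := by
    refine (hasDerivAt_graphEnergy_add_smul (fun x => (hm x).ne') hsym hf u _).congr_deriv ?_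
    simp [Pi.single_apply]
  have hg_min : IsMinOn g (Icc (φ₁ x₀ - u x₀) (φ₂ x₀ - u x₀)) 0 := by
    intro t ⟨ht₁, ht₂⟩
    have hg0 : g 0 = graphEnergy m ω f u := by simp [g]
    refine hg0 ▸ hmin _ fun z => ?_
    by_cases hz : z = x₀
    · subst hz
      simp only [Pi.add_apply, Pi.smul_apply, Pi.single_eq_same, smul_eq_mul, mul_one]
      constructor <;> linarith
    · simpa [Pi.single_apply, hz] using hmem z
  refine le_antisymm ?_ ?_
  · rcases (hmem x₀).1.eq_or_lt with heq | hlt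
    · calc -graphLap m ω u x₀ ≤ -graphLap m ω φ₁ x₀ := neg_le_neg <|
            graphLap_le_graphLap_of_le_of_eq (hm x₀).le (hnn x₀) (fun y => (hmem y).1) heq
        _ ≤ f x₀ (φ₁ x₀) := hsub x₀
        _ = f x₀ (u x₀) := by rw [heq]
    · have hD := hg.nonpos_of_isMinOn_Icc
        (hg_min.on_subset (Icc_subset_Icc_right (by linarith [(hmem x₀).2]))) (by linarith)
      exact sub_nonpos.1 (nonpos_of_mul_nonpos_right hD (hm x₀))
  · rcases (hmem x₀).2.eq_or_lt with heq | hlt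
    · calc f x₀ (u x₀) = f x₀ (φ₂ x₀) := by rw [heq]
        _ ≤ -graphLap m ω φ₂ x₀ := hsuper x₀
        _ ≤ -graphLap m ω u x₀ := neg_le_neg <|
            graphLap_le_graphLap_of_le_of_eq (hm x₀).le (hnn x₀) (fun y => (hmem y).2) heq
    · have hD := hg.nonneg_of_isMinOn_Icc
        (hg_min.on_subset (Icc_subset_Icc_left (by linarith [(hmem x₀).1]))) (by linarith)
      exact sub_nonneg.1 (nonneg_of_mul_nonneg_right hD (hm x₀))

/-- a minimizer of J between a subsolution and a supersolution
solves -Δu = f(x, u). -/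
theorem sub_supersolution_minimizer {V : Type*} [Fintype V] [Nonempty V]
    (m : V → ℝ) (ω : V → V → ℝ)
    (hm : ∀ x, 0 < m x) (hsym : ∀ x y, ω x y = ω y x)
    (hnn : ∀ x y, 0 ≤ ω x y)
    (hconn : ∀ x y : V, Relation.ReflTransGen (fun a b => 0 < ω a b) x y)
    (f : V → ℝ → ℝ) (hf : ∀ x, Continuous (f x))
    (φ₁ φ₂ : V → ℝ) (hle : ∀ x, φ₁ x ≤ φ₂ x)
    (hsub : ∀ x, -graphLap m ω φ₁ x ≤ f x (φ₁ x))
    (hsuper : ∀ x, -graphLap m ω φ₂ x ≥ f x (φ₂ x))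
    (u : V → ℝ)
    (hmem : ∀ x, φ₁ x ≤ u x ∧ u x ≤ φ₂ x)
    (hmin : ∀ v : V → ℝ, (∀ x, φ₁ x ≤ v x ∧ v x ≤ φ₂ x) →
        graphEnergy m ω f u ≤ graphEnergy m ω f v) :
    ∀ x, -graphLap m ω u x = f x (u x) :=
  sub_supersolution_minimizer_general m ω hm hsym hnn f hf φ₁ φ₂ hsub hsuper u hmem hmin
end
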